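/- Let μ be a complex regular Borel measure with compact support in ℂ^d, and suppose the pushforward ν_g = π_*(|g|²μ) under the projection π(z_1, z') = z' is, for every admissible g, a sum of at most M_0 point masses, with M_0 attained at g = 1 at points ζ_1, ..., ζ_{M_0}. Define μ^j(G) = μ(G ∩ π^{-1}{ζ_j}). Then for every g, ν_g({ζ_j}) = ∫ |g|² dμ^j, and this quantity depends continuously on g in the uniform norm on supp μ; hence for g sufficiently close to 1, ν_g has point masses at exactly the points ζ_1, ..., ζ_{M_0}. -/

import Mathlib

open MeasureTheory Complex

noncomputable section

/-- Integral of a complex-valued function against a complex measure,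
via the Jordan decompositions of the real and imaginary parts. -/
noncomputable def cint {X : Type*} [MeasurableSpace X] (μ : ComplexMeasure X) (f : X → ℂ) : ℂ :=
    ((∫ x, f x ∂μ.re.toJordanDecomposition.posPart)
      - ∫ x, f x ∂μ.re.toJordanDecomposition.negPart)
  + Complex.I * ((∫ x, f x ∂μ.im.toJordanDecomposition.posPart)
      - ∫ x, f x ∂μ.im.toJordanDecomposition.negPart)

/-- The complex measure `μ` is supported in the set `S`. -/
def SuppIn {X : Type*} [MeasurableSpace X] (μ : ComplexMeasure X) (S : Set X) : Prop :=
  ∀ E : Set X, MeasurableSet E → Disjoint E S → μ E = 0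

/-- Regularity of a complex measure: all four parts of the Jordan decompositions are regular. -/
def IsRegularCM {X : Type*} [MeasurableSpace X] [TopologicalSpace X]
    (μ : ComplexMeasure X) : Prop :=
  μ.re.toJordanDecomposition.posPart.Regular ∧ μ.re.toJordanDecomposition.negPart.Regular ∧
  μ.im.toJordanDecomposition.posPart.Regular ∧ μ.im.toJordanDecomposition.negPart.Regular

/-- The monomial `z ^ α` in `ℂ^d`. -/
def mono {d : ℕ} (α : Fin d → ℕ) : (Fin d → ℂ) → ℂ := fun z => ∏ i, z i ^ α i

/-- The moment matrix `a_{αβ} = ∫ z^α conj z^β dμ`. -/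
noncomputable def momentMatrix {d : ℕ} (μ : ComplexMeasure (Fin d → ℂ)) :
    (Fin d → ℕ) → (Fin d → ℕ) → ℂ :=
  fun α β => cint μ (fun z => mono α z * (starRingEnd ℂ) (mono β z))

/-- Rank of an infinite matrix: the dimension of the span of its rows
(equivalently, the supremum of the ranks of its finite submatrices). -/
noncomputable def matRank {I J : Type*} (A : I → J → ℂ) : Cardinal :=
  Module.rank ℂ (Submodule.span ℂ (Set.range A))

/-- `μ` is the linear combination `∑ k, λ k • δ_{z k}` of point masses. -/
def IsPointMassCombo {X : Type*} [MeasurableSpace X] (μ : ComplexMeasure X)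
    {N : ℕ} (Λ : Fin N → ℂ) (z : Fin N → X) : Prop :=
  ∀ E : Set X, MeasurableSet E → μ E = ∑ k, E.indicator (fun _ => Λ k) (z k)

/-- `g` is admissible for the polydisk `P`: `g` is holomorphic and bounded on `P`
and has a bounded holomorphic inverse there. -/
def Admissible {d : ℕ} (P : Set (Fin d → ℂ)) (g : (Fin d → ℂ) → ℂ) : Prop :=
  DifferentiableOn ℂ g P ∧ (∃ C, ∀ z ∈ P, ‖g z‖ ≤ C) ∧
  ∃ h : (Fin d → ℂ) → ℂ, DifferentiableOn ℂ h P ∧ (∃ C, ∀ z ∈ P, ‖h z‖ ≤ C) ∧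
    ∀ z ∈ P, g z * h z = 1

/-! The mass of `π_*(|g|²μ)` at `ζ j` is the mass of `|g|²μ` on the fibre `π⁻¹{ζ j}`, and `μʲ` is
the restriction of `μ` to that fibre, so it equals `∫ |g|² dμʲ`. Since `μʲ` lives on the compact
set `K`, this integral is Lipschitz in `|g|²` for the uniform norm on `K`, with constant the total
variation of `μʲ`; at `g = 1` it is `λ₀ j ≠ 0`. Hence for `g` uniformly close to `1` the `M₀`
masses at the `ζ j` stay nonzero, and as `ν_g` has at most `M₀` atoms, these are all of them. -/

namespace MeasureTheory

variable {X : Type*} [MeasurableSpace X]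

theorem SignedMeasure.toJordanDecomposition_restrict (s : SignedMeasure X) {F : Set X}
    (hF : MeasurableSet F) :
    (toJordanDecomposition (s.restrict F)).posPart =
        s.toJordanDecomposition.posPart.restrict F ∧
      (toJordanDecomposition (s.restrict F)).negPart =
        s.toJordanDecomposition.negPart.restrict F := by
  have hsing := s.toJordanDecomposition.mutuallySingular.mono
    (Measure.restrict_le_self (s := F)) (Measure.restrict_le_self (s := F))
  have hjordan : toJordanDecomposition (s.restrict F) = ⟨_, _, hsing⟩ := by
    refine SignedMeasure.toJordanDecomposition_eq (VectorMeasure.ext fun E hE => ?_)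
    rw [VectorMeasure.restrict_apply _ hF hE,
      s.apply_eq_posPart_real_sub_negPart_real (hE.inter hF), JordanDecomposition.toSignedMeasure,
      Measure.toSignedMeasure_sub_apply hE]
    simp only [Measure.real, Measure.restrict_apply hE]
  rw [hjordan]
  exact ⟨rfl, rfl⟩

theorem ComplexMeasure.re_restrict (μ : ComplexMeasure X) (F : Set X) :
    ComplexMeasure.re (μ.restrict F) = (ComplexMeasure.re μ).restrict F := by
  by_cases hF : MeasurableSet F
  · ext E hE
    rw [VectorMeasure.restrict_apply _ hF hE]
    exact congrArg Complex.re (VectorMeasure.restrict_apply μ hF hE)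
  · rw [VectorMeasure.restrict_not_measurable _ hF, VectorMeasure.restrict_not_measurable _ hF,
      map_zero]

theorem ComplexMeasure.im_restrict (μ : ComplexMeasure X) (F : Set X) :
    ComplexMeasure.im (μ.restrict F) = (ComplexMeasure.im μ).restrict F := by
  by_cases hF : MeasurableSet F
  · ext E hE
    rw [VectorMeasure.restrict_apply _ hF hE]
    exact congrArg Complex.im (VectorMeasure.restrict_apply μ hF hE)
  · rw [VectorMeasure.restrict_not_measurable _ hF, VectorMeasure.restrict_not_measurable _ hF,
      map_zero]

def SignedMeasure.jordanIntegral (s : SignedMeasure X) (f : X → ℂ) : ℂ :=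
  (∫ x, f x ∂s.toJordanDecomposition.posPart) - ∫ x, f x ∂s.toJordanDecomposition.negPart

theorem SignedMeasure.jordanIntegral_restrict (s : SignedMeasure X) {F : Set X}
    (hF : MeasurableSet F) (f : X → ℂ) :
    jordanIntegral (s.restrict F) f =
      (∫ x in F, f x ∂s.toJordanDecomposition.posPart)
        - ∫ x in F, f x ∂s.toJordanDecomposition.negPart := by
  obtain ⟨hpos, hneg⟩ := s.toJordanDecomposition_restrict hF
  rw [jordanIntegral, hpos, hneg]

theorem SignedMeasure.jordanIntegral_restrict_eq_indicator (s : SignedMeasure X) {F : Set X}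
    (hF : MeasurableSet F) (f : X → ℂ) :
    jordanIntegral (s.restrict F) f = s.jordanIntegral (F.indicator f) := by
  rw [jordanIntegral_restrict s hF, jordanIntegral, integral_indicator hF, integral_indicator hF]

theorem SignedMeasure.norm_jordanIntegral_sub_le [TopologicalSpace X] [T2Space X]
    [OpensMeasurableSpace X] (s : SignedMeasure X) {K : Set X} (hK : IsCompact K)
    (hs : s.restrict K = s) {f₁ f₂ : X → ℂ} (hf₁ : ContinuousOn f₁ K) (hf₂ : ContinuousOn f₂ K)
    {ε : ℝ} (hε : ∀ x ∈ K, ‖f₁ x - f₂ x‖ ≤ ε) :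
    ‖s.jordanIntegral f₁ - s.jordanIntegral f₂‖ ≤ ε * s.totalVariation.real K := by
  have hpart (q : Measure X) [IsFiniteMeasure q] :
      ‖(∫ x in K, f₁ x ∂q) - ∫ x in K, f₂ x ∂q‖ ≤ ε * q.real K := by
    rw [← integral_sub (hf₁.integrableOn_compact hK) (hf₂.integrableOn_compact hK)]
    exact norm_setIntegral_le_of_norm_le_const (measure_lt_top q K) hε
  conv_lhs => rw [← hs, jordanIntegral_restrict s hK.measurableSet,
    jordanIntegral_restrict s hK.measurableSet, sub_sub_sub_comm]
  rw [totalVariation, measureReal_add_apply, mul_add]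
  exact (norm_sub_le _ _).trans (add_le_add (hpart _) (hpart _))

end MeasureTheory

section cint

variable {X : Type*} [MeasurableSpace X]

theorem cint_eq_jordanIntegral (μ : ComplexMeasure X) (f : X → ℂ) :
    cint μ f = μ.re.jordanIntegral f + I * μ.im.jordanIntegral f := rfl

theorem cint_restrict (μ : ComplexMeasure X) {F : Set X} (hF : MeasurableSet F) (f : X → ℂ) :
    cint (μ.restrict F) f = cint μ (F.indicator f) := by
  rw [cint_eq_jordanIntegral, cint_eq_jordanIntegral, ComplexMeasure.re_restrict μ F,
    ComplexMeasure.im_restrict μ F, SignedMeasure.jordanIntegral_restrict_eq_indicator _ hF,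
    SignedMeasure.jordanIntegral_restrict_eq_indicator _ hF]

theorem cint_one (μ : ComplexMeasure X) : cint μ (fun _ => 1) = μ Set.univ := by
  have hre : (μ Set.univ).re = _ := μ.re.apply_eq_posPart_real_sub_negPart_real .univ
  have him : (μ Set.univ).im = _ := μ.im.apply_eq_posPart_real_sub_negPart_real .univ
  simp only [cint, integral_const]
  apply Complex.ext
  · simpa using hre.symm
  · simpa using him.symm

theorem SuppIn.restrict_eq {μ : ComplexMeasure X} {S : Set X} (hμ : SuppIn μ S)
    (hS : MeasurableSet S) : μ.restrict S = μ := by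
  ext E hE
  rw [VectorMeasure.restrict_apply _ hS hE, ← Set.inter_union_sdiff E S,
    VectorMeasure.of_union Set.disjoint_sdiff_inter.symm (hE.inter hS) (hE.diff hS),
    hμ _ (hE.diff hS) Set.disjoint_sdiff_left, add_zero, Set.inter_union_sdiff]

theorem norm_cint_sub_cint_le [TopologicalSpace X] [T2Space X] [OpensMeasurableSpace X]
    (μ : ComplexMeasure X) {K : Set X} (hK : IsCompact K) (hμ : SuppIn μ K) {f₁ f₂ : X → ℂ}
    (hf₁ : ContinuousOn f₁ K) (hf₂ : ContinuousOn f₂ K) {ε : ℝ}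
    (hε : ∀ x ∈ K, ‖f₁ x - f₂ x‖ ≤ ε) :
    ‖cint μ f₁ - cint μ f₂‖ ≤
      ε * (μ.re.totalVariation.real K + μ.im.totalVariation.real K) := by
  have hre : μ.re.restrict K = μ.re := by
    rw [← ComplexMeasure.re_restrict μ K, hμ.restrict_eq hK.measurableSet]
  have him : μ.im.restrict K = μ.im := by
    rw [← ComplexMeasure.im_restrict μ K, hμ.restrict_eq hK.measurableSet]
  rw [cint_eq_jordanIntegral, cint_eq_jordanIntegral, add_sub_add_comm, ← mul_sub, mul_add]
  refine (norm_add_le _ _).trans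
    (add_le_add (μ.re.norm_jordanIntegral_sub_le hK hre hf₁ hf₂ hε) ?_)
  rw [norm_mul, norm_I, one_mul]
  exact μ.im.norm_jordanIntegral_sub_le hK him hf₁ hf₂ hε

end cint

namespace IsPointMassCombo

variable {Y : Type*} [MeasurableSpace Y] [MeasurableSingletonClass Y] {ν : ComplexMeasure Y}
  {M : ℕ} {Λ : Fin M → ℂ} {z : Fin M → Y}

theorem apply_singleton (h : IsPointMassCombo ν Λ z) (hz : Function.Injective z) (k : Fin M) :
    ν {z k} = Λ k := by
  rw [h _ (measurableSet_singleton _)]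
  simp [Set.indicator, hz.eq_iff]

theorem apply_singleton_of_notMem_range (h : IsPointMassCombo ν Λ z) {y : Y}
    (hy : y ∉ Set.range z) : ν {y} = 0 := by
  rw [h _ (measurableSet_singleton _)]
  exact Finset.sum_eq_zero fun k _ => Set.indicator_of_notMem (s := {y}) (fun h => hy ⟨k, h⟩) _

theorem of_apply_singleton_ne_zero (h : IsPointMassCombo ν Λ z) (hz : Function.Injective z)
    {N : ℕ} (hMN : M ≤ N) {w : Fin N → Y} (hw : Function.Injective w)
    (hne : ∀ j, ν {w j} ≠ 0) : IsPointMassCombo ν (fun j => ν {w j}) w := by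
  have hmem : ∀ j, ∃ k, z k = w j := fun j =>
    by_contra fun hj => hne j (h.apply_singleton_of_notMem_range hj)
  choose σ hσ using hmem
  have hσinj : Function.Injective σ := fun a b hab => hw (by rw [← hσ a, ← hσ b, hab])
  have hσbij : Function.Bijective σ := (Fintype.bijective_iff_injective_and_card σ).2
    ⟨hσinj, by simpa using le_antisymm (Fintype.card_le_of_injective σ hσinj) (by simpa using hMN)⟩
  intro E hE
  rw [h E hE]
  exact (Fintype.sum_bijective σ hσbij _ _ fun j => by
    simp only [← hσ j, h.apply_singleton hz]).symm

end IsPointMassCombo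

theorem norm_ofReal_norm_sq_sub_one_le (w : ℂ) :
    ‖((‖w‖ ^ 2 : ℝ) : ℂ) - 1‖ ≤ ‖w - 1‖ * (‖w - 1‖ + 2) := by
  have h : |‖w‖ - 1| ≤ ‖w - 1‖ := by simpa using abs_norm_sub_norm_le w 1
  have hsq : ((‖w‖ ^ 2 : ℝ) : ℂ) - 1 = ((‖w‖ - 1) * ((‖w‖ - 1) + 2) : ℝ) := by push_cast; ring
  rw [hsq, norm_real, Real.norm_eq_abs, abs_mul]
  gcongr
  exact (abs_add_le _ _).trans (by simpa using h)

open Filter Topology in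
theorem exists_pos_forall_mul_add_two_mul_lt {ι : Type*} [Finite ι] (T L : ι → ℝ)
    (hL : ∀ i, 0 < L i) : ∃ δ > 0, ∀ i, δ * (δ + 2) * T i < L i := by
  have hsmall (i : ι) : ∀ᶠ δ in 𝓝 (0 : ℝ), δ * (δ + 2) * T i < L i := by
    have hcont : Continuous fun δ : ℝ => δ * (δ + 2) * T i := by fun_prop
    simpa using hcont.tendsto 0 |>.eventually (gt_mem_nhds (by simpa using hL i))
  obtain ⟨δ, hδ, hpos⟩ := ((eventually_all.2 hsmall).filter_mono nhdsWithin_le_nhds |>.and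
    (self_mem_nhdsWithin (s := Set.Ioi 0))).exists
  exact ⟨δ, hpos, hδ⟩

theorem stability_of_supporting_points_general
    {e M₀ : ℕ} (μ : ComplexMeasure (Fin (e + 1) → ℂ)) (K : Set (Fin (e + 1) → ℂ))
    (hK : IsCompact K) (hsupp : SuppIn μ K)
    (c : Fin (e + 1) → ℂ) (r : Fin (e + 1) → ℝ)
    (hKP : K ⊆ {z : Fin (e + 1) → ℂ | ∀ i, ‖z i - c i‖ < r i})
    -- every weighted pushforward is a combination of at most M₀ point masses
    (hmax : ∀ g : (Fin (e + 1) → ℂ) → ℂ,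
      Admissible {z : Fin (e + 1) → ℂ | ∀ i, ‖z i - c i‖ < r i} g →
      ∀ νg : ComplexMeasure (Fin (e + 1) → ℂ),
        (∀ E : Set (Fin (e + 1) → ℂ), MeasurableSet E →
          νg E = cint μ (E.indicator fun w => ((‖g w‖ ^ 2 : ℝ) : ℂ))) →
        ∃ (M : ℕ), M ≤ M₀ ∧ ∃ (lam : Fin M → ℂ) (ζ' : Fin M → (Fin e → ℂ)),
          (∀ j, lam j ≠ 0) ∧ Function.Injective ζ' ∧
          IsPointMassCombo
            (νg.map (fun (z : Fin (e + 1) → ℂ) (i : Fin e) => z i.succ)) lam ζ')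
    -- the maximal number M₀ is attained at g = 1, at the points ζ j
    (ζ : Fin M₀ → (Fin e → ℂ)) (hζ : Function.Injective ζ)
    (lam₀ : Fin M₀ → ℂ) (hlam₀ : ∀ j, lam₀ j ≠ 0)
    (h1 : IsPointMassCombo
      (μ.map (fun (z : Fin (e + 1) → ℂ) (i : Fin e) => z i.succ)) lam₀ ζ)
    -- the measures μʲ supported over the fibers of the ζ j
    (μj : Fin M₀ → ComplexMeasure (Fin (e + 1) → ℂ))
    (hμj : ∀ j, ∀ E : Set (Fin (e + 1) → ℂ), MeasurableSet E →
      μj j E = μ (E ∩ (fun (z : Fin (e + 1) → ℂ) (i : Fin e) => z i.succ) ⁻¹' {ζ j})) :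
    -- (a) the mass of ν_g at ζ j is ∫ |g|² dμʲ
    (∀ g : (Fin (e + 1) → ℂ) → ℂ,
      Admissible {z : Fin (e + 1) → ℂ | ∀ i, ‖z i - c i‖ < r i} g →
      ∀ νg : ComplexMeasure (Fin (e + 1) → ℂ),
        (∀ E : Set (Fin (e + 1) → ℂ), MeasurableSet E →
          νg E = cint μ (E.indicator fun w => ((‖g w‖ ^ 2 : ℝ) : ℂ))) →
        ∀ j, νg.map (fun (z : Fin (e + 1) → ℂ) (i : Fin e) => z i.succ) {ζ j}
          = cint (μj j) (fun z => ((‖g z‖ ^ 2 : ℝ) : ℂ))) ∧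
    -- (b) for g uniformly close to 1 on supp μ the masses sit exactly at the ζ j
    (∃ δ > (0 : ℝ), ∀ g : (Fin (e + 1) → ℂ) → ℂ,
      Admissible {z : Fin (e + 1) → ℂ | ∀ i, ‖z i - c i‖ < r i} g →
      (∀ z ∈ K, ‖g z - 1‖ < δ) →
      ∀ νg : ComplexMeasure (Fin (e + 1) → ℂ),
        (∀ E : Set (Fin (e + 1) → ℂ), MeasurableSet E →
          νg E = cint μ (E.indicator fun w => ((‖g w‖ ^ 2 : ℝ) : ℂ))) →
        (∀ j, νg.map (fun (z : Fin (e + 1) → ℂ) (i : Fin e) => z i.succ) {ζ j} ≠ 0) ∧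
        IsPointMassCombo (νg.map (fun (z : Fin (e + 1) → ℂ) (i : Fin e) => z i.succ))
          (fun j => νg.map (fun (z : Fin (e + 1) → ℂ) (i : Fin e) => z i.succ) {ζ j}) ζ) := by
  set π : (Fin (e + 1) → ℂ) → (Fin e → ℂ) := fun z i => z i.succ
  have hπ : Measurable π := by fun_prop
  have hfiber : ∀ j, MeasurableSet (π ⁻¹' {ζ j}) := fun j => hπ (measurableSet_singleton _)
  have hμj_eq : ∀ j, μj j = μ.restrict (π ⁻¹' {ζ j}) := fun j =>
    VectorMeasure.ext fun E hE => by rw [hμj j E hE, VectorMeasure.restrict_apply _ (hfiber j) hE]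
  have hmass : ∀ (g : (Fin (e + 1) → ℂ) → ℂ) (νg : ComplexMeasure (Fin (e + 1) → ℂ)),
      (∀ E, MeasurableSet E → νg E = cint μ (E.indicator fun w => ((‖g w‖ ^ 2 : ℝ) : ℂ))) →
      ∀ j, νg.map π {ζ j} = cint (μj j) (fun z => ((‖g z‖ ^ 2 : ℝ) : ℂ)) := fun g νg hνg j => by
    rw [VectorMeasure.map_apply _ hπ (measurableSet_singleton _), hνg _ (hfiber j), hμj_eq j,
      cint_restrict _ (hfiber j)]
  have hcint_one : ∀ j, cint (μj j) (fun _ => 1) = lam₀ j := fun j => by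
    rw [cint_one, hμj_eq j, VectorMeasure.restrict_apply_univ,
      ← VectorMeasure.map_apply _ hπ (measurableSet_singleton _), h1.apply_singleton hζ]
  have hsuppj : ∀ j, SuppIn (μj j) K := fun j E hE hEK => by
    rw [hμj j E hE]
    exact hsupp _ (hE.inter (hfiber j)) (hEK.mono_left Set.inter_subset_left)
  obtain ⟨δ, hδ, hδsmall⟩ := exists_pos_forall_mul_add_two_mul_lt
    (fun j => (μj j).re.totalVariation.real K + (μj j).im.totalVariation.real K)
    (fun j => ‖lam₀ j‖) fun j => norm_pos_iff.2 (hlam₀ j)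
  refine ⟨fun g _ νg hνg j => hmass g νg hνg j, δ, hδ, fun g hg hclose νg hνg => ?_⟩
  have hne : ∀ j, νg.map π {ζ j} ≠ 0 := by
    intro j h0
    have hgK : ContinuousOn g K := hg.1.continuousOn.mono hKP
    have hbound := norm_cint_sub_cint_le (μj j) hK (hsuppj j)
      (f₁ := fun z => ((‖g z‖ ^ 2 : ℝ) : ℂ)) (by fun_prop) continuousOn_const
      (ε := δ * (δ + 2)) fun z hz =>
        (norm_ofReal_norm_sq_sub_one_le (g z)).trans (by gcongr <;> exact (hclose z hz).le)
    rw [← hmass g νg hνg j, h0, hcint_one j, zero_sub, norm_neg] at hbound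
    exact (hbound.trans_lt (hδsmall j)).false
  obtain ⟨M, hM, lam, ζ', -, hζ', hcombo⟩ := hmax g hg νg hνg
  exact ⟨hne, hcombo.of_apply_singleton_ne_zero hζ' hM hζ hne⟩

theorem stability_of_supporting_points
    {e M₀ : ℕ} (μ : ComplexMeasure (Fin (e + 1) → ℂ)) (K : Set (Fin (e + 1) → ℂ))
    (hK : IsCompact K) (hsupp : SuppIn μ K) (hreg : IsRegularCM μ)
    (c : Fin (e + 1) → ℂ) (r : Fin (e + 1) → ℝ) (hr : ∀ i, 0 < r i)
    (hKP : K ⊆ {z : Fin (e + 1) → ℂ | ∀ i, ‖z i - c i‖ < r i})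
    -- every weighted pushforward is a combination of at most M₀ point masses
    (hmax : ∀ g : (Fin (e + 1) → ℂ) → ℂ,
      Admissible {z : Fin (e + 1) → ℂ | ∀ i, ‖z i - c i‖ < r i} g →
      ∀ νg : ComplexMeasure (Fin (e + 1) → ℂ),
        (∀ E : Set (Fin (e + 1) → ℂ), MeasurableSet E →
          νg E = cint μ (E.indicator fun w => ((‖g w‖ ^ 2 : ℝ) : ℂ))) →
        ∃ (M : ℕ), M ≤ M₀ ∧ ∃ (lam : Fin M → ℂ) (ζ' : Fin M → (Fin e → ℂ)),
          (∀ j, lam j ≠ 0) ∧ Function.Injective ζ' ∧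
          IsPointMassCombo
            (νg.map (fun (z : Fin (e + 1) → ℂ) (i : Fin e) => z i.succ)) lam ζ')
    -- the maximal number M₀ is attained at g = 1, at the points ζ j
    (ζ : Fin M₀ → (Fin e → ℂ)) (hζ : Function.Injective ζ)
    (lam₀ : Fin M₀ → ℂ) (hlam₀ : ∀ j, lam₀ j ≠ 0)
    (h1 : IsPointMassCombo
      (μ.map (fun (z : Fin (e + 1) → ℂ) (i : Fin e) => z i.succ)) lam₀ ζ)
    -- the measures μʲ supported over the fibers of the ζ j
    (μj : Fin M₀ → ComplexMeasure (Fin (e + 1) → ℂ))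
    (hμj : ∀ j, ∀ E : Set (Fin (e + 1) → ℂ), MeasurableSet E →
      μj j E = μ (E ∩ (fun (z : Fin (e + 1) → ℂ) (i : Fin e) => z i.succ) ⁻¹' {ζ j})) :
    -- (a) the mass of ν_g at ζ j is ∫ |g|² dμʲ
    (∀ g : (Fin (e + 1) → ℂ) → ℂ,
      Admissible {z : Fin (e + 1) → ℂ | ∀ i, ‖z i - c i‖ < r i} g →
      ∀ νg : ComplexMeasure (Fin (e + 1) → ℂ),
        (∀ E : Set (Fin (e + 1) → ℂ), MeasurableSet E →
          νg E = cint μ (E.indicator fun w => ((‖g w‖ ^ 2 : ℝ) : ℂ))) →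
        ∀ j, νg.map (fun (z : Fin (e + 1) → ℂ) (i : Fin e) => z i.succ) {ζ j}
          = cint (μj j) (fun z => ((‖g z‖ ^ 2 : ℝ) : ℂ))) ∧
    -- (b) for g uniformly close to 1 on supp μ the masses sit exactly at the ζ j
    (∃ δ > (0 : ℝ), ∀ g : (Fin (e + 1) → ℂ) → ℂ,
      Admissible {z : Fin (e + 1) → ℂ | ∀ i, ‖z i - c i‖ < r i} g →
      (∀ z ∈ K, ‖g z - 1‖ < δ) →
      ∀ νg : ComplexMeasure (Fin (e + 1) → ℂ),
        (∀ E : Set (Fin (e + 1) → ℂ), MeasurableSet E →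
          νg E = cint μ (E.indicator fun w => ((‖g w‖ ^ 2 : ℝ) : ℂ))) →
        (∀ j, νg.map (fun (z : Fin (e + 1) → ℂ) (i : Fin e) => z i.succ) {ζ j} ≠ 0) ∧
        IsPointMassCombo (νg.map (fun (z : Fin (e + 1) → ℂ) (i : Fin e) => z i.succ))
          (fun j => νg.map (fun (z : Fin (e + 1) → ℂ) (i : Fin e) => z i.succ) {ζ j}) ζ) :=
  stability_of_supporting_points_general μ K hK hsupp c r hKP hmax ζ hζ lam₀ hlam₀ h1 μj hμj
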